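/- Let r ∈ (0, 1/2), θ₀ = arccos(2r), and φ(θ) = arccos(cos θ/(2r)) on (θ₀, π - θ₀). Then φ' is strictly decreasing on (θ₀, π/2] and strictly increasing on [π/2, π - θ₀), with minimum value 1/(2r) at θ = π/2, and φ'(θ) → +∞ as θ → θ₀⁺ and as θ → (π - θ₀)⁻. -/

import Mathlib

/-!
Write `a = 2r`, so `θ₀ = arccos a`. On `(θ₀, π - θ₀)` the derivative of `θ ↦ arccos (cos θ / a)`
is `sin θ / √(a² - cos² θ)`, whose square is `(1 - c) / (a² - c) = 1 + (1 - a²) / (a² - c)` with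
`c = cos² θ`. For `a < 1` this is strictly increasing in `c ∈ [0, a²)`, and `cos² θ` decreases on
`(θ₀, π/2]` and increases on `[π/2, π - θ₀)`. At the endpoints `cos² θ = a²` while `sin θ > 0`,
so the derivative blows up.
-/

open Real Filter Set Topology

noncomputable def arccosCosDivDeriv (a θ : ℝ) : ℝ :=
  sin θ / √(a ^ 2 - cos θ ^ 2)

lemma cos_sq_lt_sq_of_mem_Ioo_arccos {a θ : ℝ} (ha₁ : -1 ≤ a) (ha₂ : a ≤ 1)
    (hθ : θ ∈ Ioo (arccos a) (π - arccos a)) : cos θ ^ 2 < a ^ 2 := by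
  have hcos : cos (arccos a) = a := cos_arccos ha₁ ha₂
  have h₀ : 0 ≤ arccos a := arccos_nonneg a
  refine sq_lt_sq' ?_ ?_
  · have := cos_lt_cos_of_nonneg_of_le_pi (by linarith [hθ.1]) (by linarith) hθ.2
    rwa [cos_pi_sub, hcos] at this
  · rw [← hcos]
    exact cos_lt_cos_of_nonneg_of_le_pi h₀ (by linarith [hθ.2]) hθ.1

lemma sin_pos_of_mem_Ioo_arccos {a θ : ℝ} (hθ : θ ∈ Ioo (arccos a) (π - arccos a)) :
    0 < sin θ :=
  sin_pos_of_pos_of_lt_pi (by linarith [hθ.1, arccos_nonneg a])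
    (by linarith [hθ.2, arccos_nonneg a])

lemma hasDerivAt_arccos_cos_div {a θ : ℝ} (ha : 0 < a) (hθ : cos θ ^ 2 < a ^ 2) :
    HasDerivAt (fun θ => arccos (cos θ / a)) (arccosCosDivDeriv a θ) θ := by
  obtain ⟨hlo, hhi⟩ := abs_lt.1 (abs_lt_of_sq_lt_sq hθ ha.le)
  have hsqrt : √(a ^ 2 - cos θ ^ 2) = a * √(1 - (cos θ / a) ^ 2) := by
    rw [show a ^ 2 - cos θ ^ 2 = a ^ 2 * (1 - (cos θ / a) ^ 2) by field_simp,
      sqrt_mul (sq_nonneg a), sqrt_sq ha.le]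
  have hpos : 0 < √(1 - (cos θ / a) ^ 2) := by
    rw [sqrt_pos, sub_pos, div_pow, div_lt_one (by positivity)]
    exact hθ
  refine ((hasDerivAt_arccos ?_ ?_).comp θ ((hasDerivAt_cos θ).div_const a)).congr_deriv ?_
  · rw [ne_eq, div_eq_iff ha.ne']; linarith
  · rw [ne_eq, div_eq_iff ha.ne']; linarith
  · rw [arccosCosDivDeriv, hsqrt]
    field_simp

lemma sq_arccosCosDivDeriv {a θ : ℝ} (hθ : cos θ ^ 2 < a ^ 2) :
    arccosCosDivDeriv a θ ^ 2 = (1 - cos θ ^ 2) / (a ^ 2 - cos θ ^ 2) := by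
  rw [arccosCosDivDeriv, div_pow, sq_sqrt (by linarith), sin_sq]

lemma strictMonoOn_one_sub_div_sub {b : ℝ} (hb : b < 1) :
    StrictMonoOn (fun t => (1 - t) / (b - t)) (Iio b) := by
  intro s hs t ht hst
  rw [mem_Iio] at hs ht
  rw [div_lt_div_iff₀ (by linarith) (by linarith)]
  nlinarith [mul_pos (sub_pos.2 hst) (sub_pos.2 hb)]

lemma arccosCosDivDeriv_lt_of_cos_sq_lt {a x y : ℝ} (ha : a ^ 2 < 1) (hx₀ : 0 ≤ sin x)
    (hx : cos x ^ 2 < a ^ 2) (hy : cos y ^ 2 < a ^ 2) (hxy : cos y ^ 2 < cos x ^ 2) :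
    arccosCosDivDeriv a y < arccosCosDivDeriv a x := by
  refine lt_of_pow_lt_pow_left₀ 2 (div_nonneg hx₀ (sqrt_nonneg _)) ?_
  rw [sq_arccosCosDivDeriv hx, sq_arccosCosDivDeriv hy]
  exact strictMonoOn_one_sub_div_sub ha hy hx hxy

lemma arccosCosDivDeriv_pi_div_two {a : ℝ} (ha : 0 ≤ a) :
    arccosCosDivDeriv a (π / 2) = 1 / a := by
  simp only [arccosCosDivDeriv, sin_pi_div_two, cos_pi_div_two]
  rw [zero_pow two_ne_zero, sub_zero, sqrt_sq ha]

lemma arccos_lt_pi_sub_arccos {a : ℝ} (ha : 0 < a) : arccos a < π - arccos a := by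
  linarith [arccos_lt_pi_div_two.2 ha]

lemma Ioc_arccos_pi_div_two_subset {a : ℝ} (ha : 0 < a) :
    Ioc (arccos a) (π / 2) ⊆ Ioo (arccos a) (π - arccos a) := fun _ hθ =>
  ⟨hθ.1, by linarith [hθ.2, arccos_lt_pi_div_two.2 ha]⟩

lemma Ico_pi_div_two_arccos_subset {a : ℝ} (ha : 0 < a) :
    Ico (π / 2) (π - arccos a) ⊆ Ioo (arccos a) (π - arccos a) := fun _ hθ =>
  ⟨by linarith [hθ.1, arccos_lt_pi_div_two.2 ha], hθ.2⟩

lemma strictAntiOn_arccosCosDivDeriv {a : ℝ} (ha₀ : 0 < a) (ha₁ : a < 1) :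
    StrictAntiOn (arccosCosDivDeriv a) (Ioc (arccos a) (π / 2)) := by
  intro x hx y hy hxy
  have hx' := Ioc_arccos_pi_div_two_subset ha₀ hx
  have hy' := Ioc_arccos_pi_div_two_subset ha₀ hy
  have hcos_y : 0 ≤ cos y :=
    cos_nonneg_of_mem_Icc ⟨by linarith [hy.1, arccos_nonneg a, pi_pos], hy.2⟩
  have hcos : cos y < cos x :=
    cos_lt_cos_of_nonneg_of_le_pi (by linarith [hx.1, arccos_nonneg a])
      (by linarith [hy.2, pi_pos]) hxy
  exact arccosCosDivDeriv_lt_of_cos_sq_lt (by nlinarith) (sin_pos_of_mem_Ioo_arccos hx').le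
    (cos_sq_lt_sq_of_mem_Ioo_arccos (by linarith) ha₁.le hx')
    (cos_sq_lt_sq_of_mem_Ioo_arccos (by linarith) ha₁.le hy')
    (pow_lt_pow_left₀ hcos hcos_y two_ne_zero)

lemma strictMonoOn_arccosCosDivDeriv {a : ℝ} (ha₀ : 0 < a) (ha₁ : a < 1) :
    StrictMonoOn (arccosCosDivDeriv a) (Ico (π / 2) (π - arccos a)) := by
  intro x hx y hy hxy
  have hx' := Ico_pi_div_two_arccos_subset ha₀ hx
  have hy' := Ico_pi_div_two_arccos_subset ha₀ hy
  have hcos_x : cos x ≤ 0 :=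
    cos_nonpos_of_pi_div_two_le_of_le hx.1 (by linarith [hx.2, arccos_nonneg a, pi_pos])
  have hcos : cos y < cos x :=
    cos_lt_cos_of_nonneg_of_le_pi (by linarith [hx.1, pi_pos])
      (by linarith [hy.2, arccos_nonneg a]) hxy
  exact arccosCosDivDeriv_lt_of_cos_sq_lt (by nlinarith) (sin_pos_of_mem_Ioo_arccos hy').le
    (cos_sq_lt_sq_of_mem_Ioo_arccos (by linarith) ha₁.le hy')
    (cos_sq_lt_sq_of_mem_Ioo_arccos (by linarith) ha₁.le hx') (by nlinarith)

lemma tendsto_arccosCosDivDeriv_atTop {a t : ℝ} {l : Filter ℝ} (hl : l ≤ 𝓝 t)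
    (hsin : 0 < sin t) (hcos : cos t ^ 2 = a ^ 2) (hev : ∀ᶠ θ in l, cos θ ^ 2 < a ^ 2) :
    Tendsto (arccosCosDivDeriv a) l atTop := by
  have hnum : Tendsto sin l (𝓝 (sin t)) := (continuous_sin.tendsto t).mono_left hl
  have hden : Tendsto (fun θ => √(a ^ 2 - cos θ ^ 2)) l (𝓝[>] 0) := by
    refine tendsto_nhdsWithin_of_tendsto_nhds_of_eventually_within _ ?_ ?_
    · have hcont : Continuous fun θ => √(a ^ 2 - cos θ ^ 2) := by fun_prop
      simpa [hcos] using (hcont.tendsto t).mono_left hl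
    · filter_upwards [hev] with θ hθ
      exact sqrt_pos.2 (sub_pos.2 hθ)
  exact hnum.pos_mul_atTop hsin (tendsto_inv_nhdsGT_zero.comp hden)

lemma tendsto_arccosCosDivDeriv_nhdsGT_arccos {a : ℝ} (ha₀ : 0 < a) (ha₁ : a < 1) :
    Tendsto (arccosCosDivDeriv a) (𝓝[>] arccos a) atTop := by
  refine tendsto_arccosCosDivDeriv_atTop nhdsWithin_le_nhds
    (sin_pos_of_pos_of_lt_pi (arccos_pos.2 ha₁) (arccos_lt_pi.2 (by linarith)))
    (by rw [cos_arccos (by linarith) ha₁.le]) ?_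
  filter_upwards [Ioo_mem_nhdsGT (arccos_lt_pi_sub_arccos ha₀)] with θ hθ
  exact cos_sq_lt_sq_of_mem_Ioo_arccos (by linarith) ha₁.le hθ

lemma tendsto_arccosCosDivDeriv_nhdsLT_pi_sub_arccos {a : ℝ} (ha₀ : 0 < a) (ha₁ : a < 1) :
    Tendsto (arccosCosDivDeriv a) (𝓝[<] (π - arccos a)) atTop := by
  refine tendsto_arccosCosDivDeriv_atTop nhdsWithin_le_nhds ?_
    (by rw [cos_pi_sub, cos_arccos (by linarith) ha₁.le, neg_sq]) ?_
  · rw [sin_pi_sub]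
    exact sin_pos_of_pos_of_lt_pi (arccos_pos.2 ha₁) (arccos_lt_pi.2 (by linarith))
  filter_upwards [Ioo_mem_nhdsLT (arccos_lt_pi_sub_arccos ha₀)] with θ hθ
  exact cos_sq_lt_sq_of_mem_Ioo_arccos (by linarith) ha₁.le hθ

theorem stmt_15 (r θ₀ : ℝ) (hr : r ∈ Set.Ioo (0 : ℝ) (1/2))
    (hθ₀ : θ₀ = Real.arccos (2 * r))
    (φ : ℝ → ℝ) (hφ : ∀ θ, φ θ = Real.arccos (Real.cos θ / (2 * r))) :
    StrictAntiOn (deriv φ) (Set.Ioc θ₀ (π / 2)) ∧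
    StrictMonoOn (deriv φ) (Set.Ico (π / 2) (π - θ₀)) ∧
    deriv φ (π / 2) = 1 / (2 * r) ∧
    (∀ θ ∈ Set.Ioo θ₀ (π - θ₀), 1 / (2 * r) ≤ deriv φ θ) ∧
    Tendsto (deriv φ) (nhdsWithin θ₀ (Set.Ioi θ₀)) atTop ∧
    Tendsto (deriv φ) (nhdsWithin (π - θ₀) (Set.Iio (π - θ₀))) atTop := by
  have ha₀ : 0 < 2 * r := by linarith [hr.1]
  have ha₁ : 2 * r < 1 := by linarith [hr.2]
  obtain rfl : φ = fun θ => arccos (cos θ / (2 * r)) := funext hφ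
  subst hθ₀
  have hderiv : EqOn (arccosCosDivDeriv (2 * r)) (deriv fun θ => arccos (cos θ / (2 * r)))
      (Ioo (arccos (2 * r)) (π - arccos (2 * r))) := fun θ hθ =>
    (hasDerivAt_arccos_cos_div ha₀
      (cos_sq_lt_sq_of_mem_Ioo_arccos (by linarith) ha₁.le hθ)).deriv.symm
  have hanti := (strictAntiOn_arccosCosDivDeriv ha₀ ha₁).congr
    (hderiv.mono (Ioc_arccos_pi_div_two_subset ha₀))
  have hmono := (strictMonoOn_arccosCosDivDeriv ha₀ ha₁).congr
    (hderiv.mono (Ico_pi_div_two_arccos_subset ha₀))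
  have hmid : π / 2 ∈ Ioo (arccos (2 * r)) (π - arccos (2 * r)) :=
    Ioc_arccos_pi_div_two_subset ha₀ ⟨arccos_lt_pi_div_two.2 ha₀, le_rfl⟩
  have hvalue := (hderiv hmid).symm.trans (arccosCosDivDeriv_pi_div_two ha₀.le)
  refine ⟨hanti, hmono, hvalue, fun θ hθ => ?_, ?_, ?_⟩
  · rw [← hvalue]
    rcases le_total θ (π / 2) with h | h
    · exact hanti.antitoneOn ⟨hθ.1, h⟩ ⟨hmid.1, le_rfl⟩ h
    · exact hmono.monotoneOn ⟨le_rfl, hmid.2⟩ ⟨h, hθ.2⟩ h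
  · refine (tendsto_arccosCosDivDeriv_nhdsGT_arccos ha₀ ha₁).congr' ?_
    filter_upwards [Ioo_mem_nhdsGT (arccos_lt_pi_sub_arccos ha₀)] with θ hθ using hderiv hθ
  · refine (tendsto_arccosCosDivDeriv_nhdsLT_pi_sub_arccos ha₀ ha₁).congr' ?_
    filter_upwards [Ioo_mem_nhdsLT (arccos_lt_pi_sub_arccos ha₀)] with θ hθ using hderiv hθ
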